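/- arXiv:2006.16918 — 2 statements merged into one kernel-verified Lean document; each statement's English description precedes it below -/
import Mathlib

section
/- Let G be a finitely generated group and let H be a finitely generated subgroup of G. If Cay(H,S) is not minor excluded for some finite generating set S of H, then there exists a finite generating set of G with respect to which Cay(G, ·) is not minor excluded. -/
open scoped Pointwise

/-- The Cayley graph of a group `G` with respect to `S`: vertex set `G`, with `g` and `h`
adjacent iff `g⁻¹ * h ∈ S ∪ S⁻¹`. -/
def cayleyGraph (G : Type*) [Group G] (S : Set G) : SimpleGraph G where
  Adj g h := g ≠ h ∧ g⁻¹ * h ∈ S ∪ S⁻¹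
  symm := ⟨by
    rintro g h ⟨hne, hmem⟩
    refine ⟨hne.symm, ?_⟩
    have he : h⁻¹ * g = (g⁻¹ * h)⁻¹ := by group
    rw [he]
    rcases hmem with hs | hs
    · exact Or.inr (Set.inv_mem_inv.mpr hs)
    · exact Or.inl (Set.mem_inv.mp hs)⟩
  loopless := ⟨fun g h => h.1 rfl⟩

/-- A finite graph `Δ` is a minor of `Γ` if there are pairwise-disjoint connected finite
branch sets in `Γ`, in bijection with the vertices of `Δ`, such that whenever two vertices
of `Δ` are adjacent the corresponding branch sets are joined by an edge of `Γ`. -/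
def IsMinor {V W : Type*} [Fintype V] (Δ : SimpleGraph V) (Γ : SimpleGraph W) : Prop :=
  ∃ B : V → Finset W,
    (∀ v, (Γ.induce (B v : Set W)).Connected) ∧
    (Pairwise fun v w => Disjoint (B v) (B w)) ∧
    (∀ v w, Δ.Adj v w → ∃ x ∈ B v, ∃ y ∈ B w, Γ.Adj x y)

/-- A graph is minor excluded if there exists some finite graph that is not a minor of it. -/
def MinorExcluded {W : Type*} (Γ : SimpleGraph W) : Prop :=
  ∃ (n : ℕ) (Δ : SimpleGraph (Fin n)), ¬ IsMinor Δ Γ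

/-! Enlarge a generating set of `G` by the generators of `H`: the inclusion `H → G` is then an
injective homomorphism of Cayley graphs, and injective homomorphisms carry minors forward, since
images of connected branch sets are connected and injectivity keeps them disjoint. -/

namespace SimpleGraph

variable {W X : Type*} {Γ : SimpleGraph W} {Γ' : SimpleGraph X}

theorem Connected.induce_image (f : Γ →g Γ') {s : Set W} (hs : (Γ.induce s).Connected) :
    (Γ'.induce (f '' s)).Connected :=
  hs.map (induceHom f (Set.mapsTo_image f s))
    ((Set.mapsTo_image f s).restrict_surjective_iff.mpr (Set.surjOn_image f s))

end SimpleGraph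

section Minor

variable {V W X : Type*} {Γ : SimpleGraph W} {Γ' : SimpleGraph X}

theorem IsMinor.of_injective_hom [Fintype V] {Δ : SimpleGraph V} (f : Γ →g Γ')
    (hf : Function.Injective f) (h : IsMinor Δ Γ) : IsMinor Δ Γ' := by
  classical
  obtain ⟨B, hconn, hdisj, hedge⟩ := h
  refine ⟨fun v => (B v).image f, fun v => ?_, fun v w hvw => ?_, fun v w hvw => ?_⟩
  · rw [Finset.coe_image]
    exact (hconn v).induce_image f
  · exact (Finset.disjoint_image hf).mpr (hdisj hvw)
  · obtain ⟨x, hx, y, hy, hxy⟩ := hedge v w hvw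
    exact ⟨f x, Finset.mem_image_of_mem f hx, f y, Finset.mem_image_of_mem f hy, f.map_rel hxy⟩

theorem MinorExcluded.of_injective_hom (f : Γ →g Γ') (hf : Function.Injective f)
    (h : MinorExcluded Γ') : MinorExcluded Γ := by
  obtain ⟨n, Δ, hΔ⟩ := h
  exact ⟨n, Δ, fun hmin => hΔ (hmin.of_injective_hom f hf)⟩

end Minor

def cayleyGraphHom {H G : Type*} [Group H] [Group G] (φ : H →* G) (hφ : Function.Injective φ)
    {S : Set H} {T : Set G} (hST : φ '' S ⊆ T) : cayleyGraph H S →g cayleyGraph G T where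
  toFun := φ
  map_rel' := by
    rintro x y ⟨hne, hmem⟩
    refine ⟨hφ.ne hne, ?_⟩
    rw [← map_inv, ← map_mul]
    rcases hmem with hs | hs
    · exact Or.inl (hST ⟨_, hs, rfl⟩)
    · exact Or.inr (by simpa only [Set.mem_inv, map_inv] using hST ⟨_, hs, rfl⟩)

theorem not_minorExcluded_of_subgroup_general (G : Type*) [Group G] [Group.FG G]
    (H : Subgroup G)
    (S : Finset H)
    (h : ¬ MinorExcluded (cayleyGraph H (S : Set H))) :
    ∃ T : Finset G, Subgroup.closure (T : Set G) = ⊤ ∧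
      ¬ MinorExcluded (cayleyGraph G (T : Set G)) := by
  classical
  obtain ⟨T₀, hT₀⟩ := Group.FG.out (G := G)
  have hST : H.subtype '' (S : Set H) ⊆ ((S.image H.subtype ∪ T₀ : Finset G) : Set G) := by
    simp only [Finset.coe_union, Finset.coe_image, Set.subset_union_left]
  refine ⟨S.image H.subtype ∪ T₀, ?_, fun hG => h ?_⟩
  · exact top_unique (hT₀ ▸ Subgroup.closure_mono (by simp))
  · exact hG.of_injective_hom (cayleyGraphHom H.subtype H.subtype_injective hST)
      H.subtype_injective

/-- Let `G` be a finitely generated group and `H` a finitely generated subgroup of `G`.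
If `Cay(H,S)` is not minor excluded for some finite generating set `S` of `H`, then there is
a finite generating set of `G` with respect to which the Cayley graph of `G` is not minor
excluded. -/
theorem not_minorExcluded_of_subgroup (G : Type*) [Group G] [Group.FG G]
    (H : Subgroup G) [Group.FG H]
    (S : Finset H) (hS : Subgroup.closure (S : Set H) = ⊤)
    (h : ¬ MinorExcluded (cayleyGraph H (S : Set H))) :
    ∃ T : Finset G, Subgroup.closure (T : Set G) = ⊤ ∧
      ¬ MinorExcluded (cayleyGraph G (T : Set G)) :=
  not_minorExcluded_of_subgroup_general G H S h
end

section
/- There exists a finitely generated group G with infinitely many ends and a finite generating set T of G such that the Cayley graph Cay(G,T) is not minor excluded, i.e., every finite graph is a minor of Cay(G,T). -/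
open scoped Pointwise

/-- A one-way infinite path (ray) in a graph: an injective sequence of vertices in which
consecutive vertices are adjacent. -/
def IsRay {V : Type*} (Γ : SimpleGraph V) (r : ℕ → V) : Prop :=
  Function.Injective r ∧ ∀ n, Γ.Adj (r n) (r (n + 1))

/-- Two rays are equivalent (belong to the same end) if for every finite set `F` of vertices
their tails remain in the same connected component of the complement of `F`. -/
def RayEquiv {V : Type*} (Γ : SimpleGraph V) (r₁ r₂ : ℕ → V) : Prop :=
  ∀ F : Finset V, ∃ N : ℕ, ∀ m ≥ N, ∀ n ≥ N,
    ∃ (h₁ : r₁ m ∈ ((F : Set V))ᶜ) (h₂ : r₂ n ∈ ((F : Set V))ᶜ),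
      (Γ.induce ((F : Set V))ᶜ).Reachable ⟨r₁ m, h₁⟩ ⟨r₂ n, h₂⟩

/-!
Take `G = ℤ³ ∗ ℤ³`, generated by the unit vectors of both factors. A factor spans a copy of
the grid `ℤ³`, which has every finite graph as a minor. For the ends: the elements whose normal
form starts with a fixed letter `a` followed by at least one more letter can be left only through
the vertex `a`, so the rays `m ↦ x^(k+1) y^(m+1)`, with `x`, `y` in different factors, lie in
pairwise different ends.
-/

namespace SimpleGraph

variable {V : Type*} {Γ : SimpleGraph V}

theorem connected_induce_image_Iic (f : ℕ → V) (hf : ∀ t, Γ.Adj (f t) (f (t + 1)))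
    (k : ℕ) : (Γ.induce (f '' Set.Iic k)).Connected := by
  induction k with
  | zero =>
    have : f '' Set.Iic 0 = {f 0} := by ext; simp [eq_comm]
    rw [this]
    exact .of_subsingleton
  | succ k ih =>
    have : f '' Set.Iic (k + 1) = f '' Set.Iic k ∪ {f (k + 1)} := by
      ext; simp [Nat.le_succ_iff, or_comm, eq_comm]
    rw [this]
    exact connected_induce_union ih.preconnected .of_subsingleton ⟨k, le_refl k, rfl⟩ rfl
      (hf k)

theorem isMinor_of_grid {n : ℕ} (Δ : SimpleGraph (Fin n)) (f : ℕ × ℕ × ℕ → V)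
    (hf : Function.Injective f) (hx : ∀ x y z, Γ.Adj (f (x, y, z)) (f (x + 1, y, z)))
    (hy : ∀ x y z, Γ.Adj (f (x, y, z)) (f (x, y + 1, z)))
    (hz : ∀ x y z, Γ.Adj (f (x, y, z)) (f (x, y, z + 1))) : IsMinor Δ Γ := by
  -- Vertex `v` becomes a path running along the `y`-axis in layer `0` up to height `v`, then
  -- along the `x`-axis in layer `1`; the paths of `v < w` meet above and below `(w, v)`.
  classical
  set row : ℕ → ℕ → V := fun v t => f (v, t, 0)
  set col : ℕ → ℕ → V := fun v t => f (v + t, v, 1)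
  refine ⟨fun v => (Finset.Iic (v : ℕ)).image (row v) ∪ (Finset.Iic n).image (col v),
    fun v => ?_, fun v w hvw => ?_, fun v w hvw => ?_⟩
  · dsimp only
    rw [Finset.coe_union, Finset.coe_image, Finset.coe_image, Finset.coe_Iic, Finset.coe_Iic]
    have hrow := connected_induce_image_Iic (row v) (fun t => hy v t 0) v
    have hcol := connected_induce_image_Iic (Γ := Γ) (col v)
      (fun t => by simpa [col, add_assoc] using hx (v + t) v 1) n
    exact connected_induce_union hrow.preconnected hcol.preconnected (v := row v v)
      (w := col v 0) ⟨v, Set.mem_Iic.2 le_rfl, rfl⟩ ⟨0, Set.mem_Iic.2 (Nat.zero_le n), rfl⟩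
      (by simpa [row, col] using hz v v 0)
  · dsimp only
    rw [Finset.disjoint_left]
    simp only [Finset.mem_union, Finset.mem_image, Finset.mem_Iic, row, col]
    rintro _ (⟨t, -, rfl⟩ | ⟨t, -, rfl⟩) (⟨s, -, hs⟩ | ⟨s, -, hs⟩) <;>
      simp only [hf.eq_iff, Prod.mk.injEq] at hs <;> omega
  · simp only [Finset.mem_union, Finset.mem_image, Finset.mem_Iic, row, col]
    rcases lt_or_gt_of_ne (Δ.ne_of_adj hvw) with h | h
    · refine ⟨_, Or.inr ⟨w - v, by omega, rfl⟩, _, Or.inl ⟨v, h.le, rfl⟩, ?_⟩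
      simpa [Nat.add_sub_cancel' h.le] using (hz w v 0).symm
    · exact ⟨_, Or.inl ⟨w, h.le, rfl⟩, _, Or.inr ⟨v - w, by omega, rfl⟩,
        by simpa [Nat.add_sub_cancel' h.le] using hz v w 0⟩

theorem not_rayEquiv_of_forall_mem_of_forall_not_mem (F : Finset V) (P : Set V)
    (hP : ∀ x y, x ∈ P → y ∉ F → Γ.Adj x y → y ∈ P) {r₁ r₂ : ℕ → V} (h₁ : ∀ n, r₁ n ∈ P)
    (h₂ : ∀ n, r₂ n ∉ P) : ¬ RayEquiv Γ r₁ r₂ := by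
  intro hr
  obtain ⟨N, hN⟩ := hr F
  obtain ⟨hm, hn, hreach⟩ := hN N le_rfl N le_rfl
  have hclosed : ∀ y, Relation.ReflTransGen (Γ.induce (F : Set V)ᶜ).Adj ⟨r₁ N, hm⟩ y →
      (y : V) ∈ P := by
    intro y hy
    induction hy with
    | refl => exact h₁ N
    | @tail y z _ hyz ih => exact hP y z ih z.2 hyz
  exact h₂ N (hclosed _ ((reachable_iff_reflTransGen _ _).1 hreach))

end SimpleGraph

theorem cayleyGraph_adj_mul {G : Type*} [Group G] {S : Set G} (g : G) {s : G} (hs : s ∈ S)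
    (hs₁ : s ≠ 1) : (cayleyGraph G S).Adj g (g * s) :=
  ⟨fun h => hs₁ (mul_eq_left.1 h.symm), Or.inl (by simpa using hs)⟩

namespace Monoid.CoprodI

theorem closure_iUnion_image_of {ι : Type*} {G : ι → Type*} [∀ i, Group (G i)]
    {S : ∀ i, Set (G i)} (hS : ∀ i, Subgroup.closure (S i) = ⊤) :
    Subgroup.closure (⋃ i, (of : G i →* CoprodI G) '' S i) = ⊤ := by
  simp_rw [Subgroup.closure_iUnion, ← MonoidHom.map_closure, hS, ← MonoidHom.range_eq_map,
    ← range_eq_iSup, lift_of']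
  exact MonoidHom.range_eq_top.2 fun g => ⟨g, rfl⟩

namespace Word

variable {ι : Type*} {M : ι → Type*} [∀ i, Monoid (M i)] [∀ i, DecidableEq (M i)]

theorem toList_rcons {i : ι} (p : Pair M i) :
    (rcons p).toList = p.tail.toList ∨ (rcons p).toList = ⟨i, p.head⟩ :: p.tail.toList := by
  unfold rcons
  split_ifs <;> simp

variable [DecidableEq ι]

theorem tail_toList_isSuffix_smul {i : ι} (m : M i) (w : Word M) :
    w.toList.tail <:+ (of m • w).toList := by
  have hw : rcons (equivPair i w) = w := by rw [← equivPair_symm, Equiv.symm_apply_apply]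
  have h₁ : w.toList.tail <:+ (equivPair i w).tail.toList := by
    rcases toList_rcons (equivPair i w) with h | h <;> rw [hw] at h <;> simp [h, List.tail_suffix]
  refine h₁.trans ?_
  rw [of_smul_def]
  rcases toList_rcons { equivPair i w with head := m * (equivPair i w).head } with h | h <;>
    simp [h]

theorem smul_toList_eq_append_or_eq_singleton {x : Σ i, M i} {w : Word M}
    (hw : ∃ u y, w.toList = u ++ [y, x]) {i : ι} (m : M i) :
    (∃ u y, (of m • w).toList = u ++ [y, x]) ∨ (of m • w).toList = [x] := by
  obtain ⟨u, y, hw⟩ := hw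
  obtain ⟨v, hv⟩ := tail_toList_isSuffix_smul m w
  rw [hw] at hv
  rcases u with _ | ⟨a, u⟩
  · rcases List.eq_nil_or_concat v with rfl | ⟨v, z, rfl⟩
    · exact Or.inr hv.symm
    · exact Or.inl ⟨v, z, by simp [← hv]⟩
  · exact Or.inl ⟨v ++ u, y, by simp [← hv]⟩

theorem equiv_mul (g h : CoprodI M) : equiv (g * h) = g • equiv h :=
  mul_smul g h (empty : Word M)

theorem toList_equiv_of_mul_of {i j : ι} (hij : i ≠ j) {a : M i} {b : M j} (ha : a ≠ 1)
    (hb : b ≠ 1) : (equiv (of a * of b)).toList = [⟨i, a⟩, ⟨j, b⟩] := by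
  have hempty : (empty : Word M).fstIdx ≠ some j := by simp [fstIdx, empty]
  have hb' : equiv (of b) = cons b empty hempty hb := cons_eq_smul.symm
  have hab :
      equiv (of a * of b) = cons a (cons b empty hempty hb) (by simpa using hij.symm) ha := by
    rw [equiv_mul, hb']
    exact cons_eq_smul.symm
  rw [hab]
  rfl

end Word

section Cone

variable {ι : Type*} [DecidableEq ι] {G : ι → Type*} [∀ i, Group (G i)]
  [∀ i, DecidableEq (G i)]

/-- The elements whose reduced word starts with `x⁻¹` followed by at least one more letter.
It is phrased through `g⁻¹` because words only carry a left action of `CoprodI G`, while edges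
of a Cayley graph are right multiplications. -/
def cone (x : Σ i, G i) : Set (CoprodI G) :=
  {g | ∃ u y, (Word.equiv g⁻¹).toList = u ++ [y, x]}

theorem mul_of_mem_cone {x : Σ i, G i} {g : CoprodI G} (hg : g ∈ cone x) {i : ι} (m : G i)
    (hgm : g * of m ≠ (of x.2)⁻¹) : g * of m ∈ cone x := by
  have hw : Word.equiv (g * of m)⁻¹ = of m⁻¹ • Word.equiv g⁻¹ := by
    rw [mul_inv_rev, Word.equiv_mul, ← map_inv]
  rcases Word.smul_toList_eq_append_or_eq_singleton hg m⁻¹ with h | h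
  · rwa [cone, Set.mem_ofPred_eq, hw]
  · refine absurd ?_ hgm
    rw [← inv_eq_iff_eq_inv, ← Word.equiv.symm_apply_apply (g * of m)⁻¹, hw]
    change Word.prod _ = _
    rw [Word.prod, h]
    simp

theorem of_mul_of_mem_cone {i j : ι} (hij : i ≠ j) {a : G i} {b : G j} (ha : a ≠ 1)
    (hb : b ≠ 1) : of a * of b ∈ cone ⟨i, a⁻¹⟩ := by
  refine ⟨[], ⟨j, b⁻¹⟩, ?_⟩
  rw [mul_inv_rev, ← map_inv, ← map_inv,
    Word.toList_equiv_of_mul_of hij.symm (inv_ne_one.2 hb) (inv_ne_one.2 ha)]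
  rfl

theorem disjoint_cone {x y : Σ i, G i} (hxy : x ≠ y) : Disjoint (cone x) (cone y) := by
  refine Set.disjoint_left.2 fun g ⟨u, a, hx⟩ ⟨v, b, hy⟩ => hxy ?_
  simpa using congrArg List.getLast? (hx.symm.trans hy)

theorem mem_cone_of_adj {S : Set (CoprodI G)} (hS : ∀ s ∈ S, ∃ i, ∃ m : G i, s = of m)
    {x : Σ i, G i} {g h : CoprodI G} (hg : g ∈ cone x) (hgh : (cayleyGraph _ S).Adj g h)
    (hh : h ≠ (of x.2)⁻¹) : h ∈ cone x := by
  obtain ⟨i, m, hm⟩ : ∃ i, ∃ m : G i, g⁻¹ * h = of m := by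
    rcases hgh.2 with hs | hs
    · exact hS _ hs
    · obtain ⟨i, m, hm⟩ := hS _ hs
      exact ⟨i, m⁻¹, by rw [map_inv, ← hm, inv_inv]⟩
  rw [← mul_inv_cancel_left g h, hm] at hh ⊢
  exact mul_of_mem_cone hg m hh

end Cone

end Monoid.CoprodI

abbrev Z3 : Type := Multiplicative (ℤ × ℤ × ℤ)

abbrev Z3FreeProd : Type := Monoid.CoprodI fun _ : Bool => Z3

namespace Z3FreeProd

open Monoid.CoprodI

abbrev incl (b : Bool) : Z3 →* Z3FreeProd := of (M := fun _ : Bool => Z3) (i := b)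

def unitVectors : Finset (ℤ × ℤ × ℤ) := {(1, 0, 0), (0, 1, 0), (0, 0, 1)}

noncomputable def gens : Finset Z3FreeProd :=
  (Finset.univ ×ˢ unitVectors).image fun p => incl p.1 (Multiplicative.ofAdd p.2)

theorem closure_ofAdd_unitVectors :
    Subgroup.closure (Multiplicative.ofAdd '' (unitVectors : Set (ℤ × ℤ × ℤ))) = ⊤ := by
  rw [Subgroup.eq_top_iff']
  intro g
  have hmem : ∀ p ∈ unitVectors, Multiplicative.ofAdd p ∈
      Subgroup.closure (Multiplicative.ofAdd '' (unitVectors : Set (ℤ × ℤ × ℤ))) :=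
    fun p hp => Subgroup.subset_closure ⟨p, hp, rfl⟩
  have hg : g = Multiplicative.ofAdd (1, 0, 0) ^ g.toAdd.1 *
      Multiplicative.ofAdd (0, 1, 0) ^ g.toAdd.2.1 *
      Multiplicative.ofAdd (0, 0, 1) ^ g.toAdd.2.2 := by
    apply Multiplicative.toAdd.injective
    simp
  rw [hg]
  exact mul_mem (mul_mem (zpow_mem (hmem _ (by simp [unitVectors])) _)
    (zpow_mem (hmem _ (by simp [unitVectors])) _)) (zpow_mem (hmem _ (by simp [unitVectors])) _)

theorem closure_gens : Subgroup.closure (gens : Set Z3FreeProd) = ⊤ := by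
  have : (gens : Set Z3FreeProd) =
      ⋃ b, incl b '' (Multiplicative.ofAdd '' (unitVectors : Set _)) := by
    ext; simp [gens]
  rw [this]
  exact closure_iUnion_image_of fun _ => closure_ofAdd_unitVectors

local notation "Γ" => cayleyGraph Z3FreeProd (gens : Set Z3FreeProd)

theorem adj_mul_incl (g : Z3FreeProd) (b : Bool) {p : ℤ × ℤ × ℤ} (hp : p ∈ unitVectors) :
    (Γ).Adj g (g * incl b (Multiplicative.ofAdd p)) := by
  refine cayleyGraph_adj_mul _ ?_ ?_
  · simp only [gens, Finset.coe_image, Finset.coe_product, Finset.coe_univ]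
    exact ⟨(b, p), ⟨trivial, hp⟩, rfl⟩
  · rw [Ne, map_eq_one_iff _ (of_injective b), ofAdd_eq_one]
    rintro rfl
    simp [unitVectors, Prod.ext_iff] at hp

theorem gens_subset_range_incl :
    ∀ s ∈ (gens : Set Z3FreeProd), ∃ b, ∃ m : Z3, s = incl b m := by
  simp only [gens, Finset.coe_image, Set.mem_image]
  rintro _ ⟨p, -, rfl⟩
  exact ⟨p.1, _, rfl⟩

def xPow (n : ℕ) : Z3 := Multiplicative.ofAdd ((n : ℤ), 0, 0)

theorem xPow_injective : Function.Injective xPow := fun m n h => by simpa [xPow] using h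

theorem xPow_succ_ne_one (n : ℕ) : xPow (n + 1) ≠ 1 := by
  rw [xPow, Ne, ofAdd_eq_one, Prod.mk_eq_zero]
  exact fun h => Nat.cast_add_one_ne_zero n h.1

def ray (k m : ℕ) : Z3FreeProd := incl false (xPow (k + 1)) * incl true (xPow (m + 1))

theorem ray_mem_cone (k m : ℕ) : ray k m ∈ cone ⟨false, (xPow (k + 1))⁻¹⟩ :=
  of_mul_of_mem_cone Bool.false_ne_true (xPow_succ_ne_one k) (xPow_succ_ne_one m)

theorem isRay_ray (k : ℕ) : IsRay Γ (ray k) := by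
  refine ⟨fun m n h => ?_, fun m => ?_⟩
  · simpa using xPow_injective (of_injective true (mul_left_cancel h))
  · have : ray k (m + 1) = ray k m * incl true (Multiplicative.ofAdd (1, 0, 0)) := by
      simp only [ray, mul_assoc, ← map_mul, xPow, ← ofAdd_add]
      simp
    rw [this]
    exact adj_mul_incl _ true (p := (1, 0, 0)) (by simp [unitVectors])

theorem not_rayEquiv_ray {k l : ℕ} (hkl : k ≠ l) : ¬ RayEquiv Γ (ray k) (ray l) := by
  refine SimpleGraph.not_rayEquiv_of_forall_mem_of_forall_not_mem {incl false (xPow (k + 1))} _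
    (fun g h hg hh hgh => mem_cone_of_adj gens_subset_range_incl hg hgh (by simpa using hh))
    (ray_mem_cone k) fun m hm => (disjoint_cone ?_).ne_of_mem hm (ray_mem_cone l m) rfl
  simpa using xPow_injective.ne (by omega : k + 1 ≠ l + 1)

def gridMap (p : ℕ × ℕ × ℕ) : Z3FreeProd :=
  incl false (Multiplicative.ofAdd ((p.1 : ℤ), (p.2.1 : ℤ), (p.2.2 : ℤ)))

theorem gridMap_injective : Function.Injective gridMap := fun p q h => by
  simpa [gridMap, Prod.ext_iff] using of_injective false h

theorem adj_gridMap_add (p : ℕ × ℕ × ℕ) {q : ℕ × ℕ × ℕ}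
    (hq : ((q.1 : ℤ), (q.2.1 : ℤ), (q.2.2 : ℤ)) ∈ unitVectors) :
    (Γ).Adj (gridMap p) (gridMap (p + q)) := by
  have : gridMap (p + q) =
      gridMap p * incl false (Multiplicative.ofAdd (q.1, q.2.1, q.2.2)) := by
    simp only [gridMap, ← map_mul, ← ofAdd_add]
    simp
  rw [this]
  exact adj_mul_incl _ false hq

theorem not_minorExcluded : ¬ MinorExcluded Γ := by
  rintro ⟨n, Δ, hΔ⟩
  exact hΔ <| SimpleGraph.isMinor_of_grid Δ gridMap gridMap_injective
    (fun x y z => adj_gridMap_add (x, y, z) (q := (1, 0, 0)) (by simp [unitVectors]))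
    (fun x y z => adj_gridMap_add (x, y, z) (q := (0, 1, 0)) (by simp [unitVectors]))
    (fun x y z => adj_gridMap_add (x, y, z) (q := (0, 0, 1)) (by simp [unitVectors]))

end Z3FreeProd

open Z3FreeProd in
/-- There exists a finitely generated group `G` with infinitely many ends and a finite
generating set `T` of `G` such that `Cay(G,T)` is not minor excluded: for every `n` there
are `n` pairwise inequivalent rays, and every finite graph is a minor of `Cay(G,T)`. -/
theorem exists_infinitelyManyEnds_not_minorExcluded :
    ∃ (G : Type) (_ : Group G) (T : Finset G),
      Subgroup.closure (T : Set G) = ⊤ ∧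
      (∀ n : ℕ, ∃ r : Fin n → ℕ → G,
        (∀ i, IsRay (cayleyGraph G (T : Set G)) (r i)) ∧
        Pairwise fun i j => ¬ RayEquiv (cayleyGraph G (T : Set G)) (r i) (r j)) ∧
      ¬ MinorExcluded (cayleyGraph G (T : Set G)) :=
  ⟨Z3FreeProd, inferInstance, gens, closure_gens,
    fun _ => ⟨fun i => ray i, fun i => isRay_ray i,
      fun _ _ hij => not_rayEquiv_ray (Fin.val_injective.ne hij)⟩,
    not_minorExcluded⟩
end
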